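/- arXiv:1607.03371 — 2 statements merged into one kernel-verified Lean document; each statement's English description precedes it below -/
import Mathlib

section
/- Let r ≥ 0 and k be integers with n = 2^{r+1} + 2, n ≡ k (mod 2^{r+2}), and 2^{r+1} + 2^r - 1 ≤ k ≤ 2^{r+2} - 2. Then r = 1, k = 6, and n = 6. -/
/-!
`k` and `n = 2^(r+1) + 2` lie at distance less than `2^(r+2)` from each other, so the congruence
forces `k = n`. The lower bound on `k` then gives `2^r < 4` and the upper bound `2 ≤ 2^r`,
whence `r = 1`.
-/

lemma abs_sub_two_pow_succ_add_two_lt (r k : ℕ) (hk1 : 2 ^ (r + 1) + 2 ^ r - 1 ≤ k)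
    (hk2 : k ≤ 2 ^ (r + 2) - 2) :
    |(k : ℤ) - ((2 ^ (r + 1) + 2 : ℕ) : ℤ)| < (2 ^ (r + 2) : ℕ) := by
  have hpos : 1 ≤ 2 ^ r := Nat.one_le_two_pow
  rw [abs_sub_lt_iff, pow_succ, pow_succ, pow_succ] at *
  generalize 2 ^ r = P at *
  push_cast
  omega

lemma eq_one_of_bounds_two_pow_succ_add_two {r : ℕ}
    (hlow : 2 ^ (r + 1) + 2 ^ r - 1 ≤ 2 ^ (r + 1) + 2)
    (hup : 2 ^ (r + 1) + 2 ≤ 2 ^ (r + 2) - 2) : r = 1 := by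
  rw [pow_succ, pow_succ, pow_succ] at *
  have hlt : 2 ^ r < 2 ^ 2 := by omega
  have hle : 2 ^ 1 ≤ 2 ^ r := by omega
  have := (Nat.pow_lt_pow_iff_right one_lt_two).mp hlt
  have := (Nat.pow_le_pow_iff_right one_lt_two).mp hle
  omega

/-- Number-theoretic core: if `n = 2^(r+1) + 2`, `n ≡ k (mod 2^(r+2))` and
`2^(r+1) + 2^r - 1 ≤ k ≤ 2^(r+2) - 2`, then `r = 1`, `k = 6` and `n = 6`. -/
theorem stmt_7 (r k n : ℕ) (hn : n = 2 ^ (r + 1) + 2)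
    (hmod : (n : ℤ) ≡ (k : ℤ) [ZMOD (2 ^ (r + 2) : ℤ)])
    (hk1 : 2 ^ (r + 1) + 2 ^ r - 1 ≤ k) (hk2 : k ≤ 2 ^ (r + 2) - 2) :
    r = 1 ∧ k = 6 ∧ n = 6 := by
  subst hn
  have hmod' : 2 ^ (r + 1) + 2 ≡ k [MOD 2 ^ (r + 2)] :=
    Int.natCast_modEq_iff.mp (by exact_mod_cast hmod)
  have hkn : 2 ^ (r + 1) + 2 = k :=
    hmod'.eq_of_abs_lt (abs_sub_two_pow_succ_add_two_lt r k hk1 hk2)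
  subst hkn
  obtain rfl := eq_one_of_bounds_two_pow_succ_add_two hk1 hk2
  norm_num
end

section
/- Let G be a group acting linearly on a vector space V, let H ≤ G, and let U be an H-invariant subspace. Suppose that for every g ∈ G \ H: (a) g·U ≠ U, and (b) the action of the subgroup H ∩ gHg^{-1} on U is irreducible. Then the subspaces {g·U : g ∈ G} pairwise intersect in 0, and G permutes them transitively; in particular, if [G : H] is finite and equal to n, there are exactly n distinct subspaces g·U. -/
/-!
For `g ∉ H`, the subspace `U ⊓ gU` is invariant under `H ∩ gHg⁻¹`, so it is `0` or `U`.
If it were `U`, then `g⁻¹U ≤ U`; since `U ≤ gU` alone does not force `gU = U` in infinite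
dimension, apply irreducibility once more, now for `g⁻¹`: `g⁻¹U` is invariant under
`H ∩ g⁻¹Hg`, hence `0` or `U`, and either way `gU = U`, contradicting (a).
Translating `U ⊓ g₁⁻¹g₂U = 0` by `g₁` gives `g₁U ⊓ g₂U = 0`. Finally (a) says that the
stabilizer of `U` is exactly `H`, so the orbit of `U` has `[G : H]` elements.
-/

namespace SubspaceTranslates

variable {R M G : Type*} [Semiring R] [AddCommMonoid M] [Module R M] [Group G]
  (ρ : G →* (M ≃ₗ[R] M))

theorem map_map_eq_map_mul (g h : G) (W : Submodule R M) :
    (W.map (ρ h).toLinearMap).map (ρ g).toLinearMap = W.map (ρ (g * h)).toLinearMap := by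
  rw [map_mul, ← Submodule.map_comp]
  rfl

theorem map_inv_le_iff {g : G} {W W' : Submodule R M} :
    W.map (ρ g⁻¹).toLinearMap ≤ W' ↔ W ≤ W'.map (ρ g).toLinearMap := by
  rw [map_inv, Submodule.map_le_iff_le_comap, Submodule.map_equiv_eq_comap_symm]
  rfl

theorem map_inv_eq_iff {g : G} {W W' : Submodule R M} :
    W.map (ρ g⁻¹).toLinearMap = W' ↔ W = W'.map (ρ g).toLinearMap := by
  rw [map_inv, eq_comm (a := W)]
  exact Submodule.map_symm_eq_iff (ρ g)

theorem map_eq_self_of_mem {H : Subgroup G} {U : Submodule R M}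
    (hU : ∀ h ∈ H, ∀ u ∈ U, ρ h u ∈ U) {h : G} (hh : h ∈ H) :
    U.map (ρ h).toLinearMap = U :=
  le_antisymm (Submodule.map_le_iff_le_comap.2 (hU h hh))
    (map_inv_le_iff ρ |>.1 <| Submodule.map_le_iff_le_comap.2 (hU h⁻¹ (inv_mem hh)))

theorem apply_mem_map_of_conj_mem {U : Submodule R M} {g x : G}
    (hx : ∀ u ∈ U, ρ (g⁻¹ * x * g) u ∈ U) : ∀ w ∈ U.map (ρ g).toLinearMap,
      ρ x w ∈ U.map (ρ g).toLinearMap := by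
  rintro _ ⟨u, hu, rfl⟩
  refine ⟨_, hx u hu, ?_⟩
  simp [← LinearEquiv.mul_apply, ← map_mul, mul_assoc]

theorem nat_card_translates {H : Subgroup G} {U : Submodule R M}
    (hstab : ∀ g, U.map (ρ g).toLinearMap = U ↔ g ∈ H) :
    Nat.card {W : Submodule R M | ∃ g : G, W = U.map (ρ g).toLinearMap} = H.index := by
  let _ : MulAction G (Submodule R M) :=
    { smul g W := W.map (ρ g).toLinearMap
      one_smul W := show W.map (ρ 1).toLinearMap = W by simp
      mul_smul g h W := (map_map_eq_map_mul ρ g h W).symm }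
  have hH : MulAction.stabilizer G U = H := Subgroup.ext hstab
  have hU : MulAction.orbit G U = {W | ∃ g : G, W = U.map (ρ g).toLinearMap} :=
    Set.ext fun _ => exists_congr fun _ => eq_comm
  rw [← hH, MulAction.index_stabilizer, hU, Nat.card_coe_set_eq]

theorem inf_map_eq_bot {H : Subgroup G} {U : Submodule R M}
    (hUinv : ∀ h ∈ H, ∀ u ∈ U, ρ h u ∈ U)
    (ha : ∀ g : G, g ∉ H → U.map (ρ g).toLinearMap ≠ U)
    (hb : ∀ g : G, g ∉ H → ∀ W : Submodule R M, W ≤ U →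
      (∀ x : G, x ∈ H → g⁻¹ * x * g ∈ H → ∀ w ∈ W, ρ x w ∈ W) → W = ⊥ ∨ W = U)
    {g : G} (hg : g ∉ H) : U ⊓ U.map (ρ g).toLinearMap = ⊥ := by
  have hinv (a x : G) (hx : a⁻¹ * x * a ∈ H) :
      ∀ w ∈ U.map (ρ a).toLinearMap, ρ x w ∈ U.map (ρ a).toLinearMap :=
    apply_mem_map_of_conj_mem ρ (hUinv _ hx)
  refine (hb g hg _ inf_le_left fun x hx hx' w hw => ⟨hUinv x hx w hw.1, hinv g x hx' w hw.2⟩)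
    |>.resolve_right fun hU => ?_
  have hle : U.map (ρ g⁻¹).toLinearMap ≤ U := (map_inv_le_iff ρ).2 (hU.ge.trans inf_le_right)
  have hg' : g⁻¹ ∉ H := fun h => hg (inv_inv g ▸ inv_mem h)
  refine ha g hg ?_
  rcases hb g⁻¹ hg' _ hle fun x _ hx' => hinv g⁻¹ x hx' with h | h
  · rw [Submodule.map_eq_bot_iff] at h
    rw [h, Submodule.map_bot]
  · exact ((map_inv_eq_iff ρ).1 h).symm

theorem map_inf_map_eq_bot {H : Subgroup G} {U : Submodule R M}
    (hH : ∀ h ∈ H, U.map (ρ h).toLinearMap = U)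
    (hdisj : ∀ g : G, g ∉ H → U ⊓ U.map (ρ g).toLinearMap = ⊥) {g₁ g₂ : G}
    (hne : U.map (ρ g₁).toLinearMap ≠ U.map (ρ g₂).toLinearMap) :
    U.map (ρ g₁).toLinearMap ⊓ U.map (ρ g₂).toLinearMap = ⊥ := by
  have hg : g₁⁻¹ * g₂ ∉ H := fun h => hne <| by
    nth_rw 1 [← hH _ h]
    rw [map_map_eq_map_mul, mul_inv_cancel_left]
  calc U.map (ρ g₁).toLinearMap ⊓ U.map (ρ g₂).toLinearMap
      = (U ⊓ U.map (ρ (g₁⁻¹ * g₂)).toLinearMap).map (ρ g₁).toLinearMap := by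
        rw [Submodule.map_inf _ (ρ g₁).injective, map_map_eq_map_mul, mul_inv_cancel_left]
    _ = ⊥ := by rw [hdisj _ hg, Submodule.map_bot]

end SubspaceTranslates

/-- If `gU ≠ U` for all `g ∉ H` and `H ∩ gHg⁻¹` acts irreducibly on `U`, then the
translates `gU` pairwise intersect in `0`, `G` permutes them transitively, and their
number is the index of `H`. -/
theorem stmt_10 {K V G : Type*} [Field K] [AddCommGroup V] [Module K V] [Group G]
    (ρ : G →* (V ≃ₗ[K] V))
    (H : Subgroup G) (n : ℕ) (hn : H.index = n)
    (U : Submodule K V)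
    (hUinv : ∀ h ∈ H, ∀ u ∈ U, ρ h u ∈ U)
    (ha : ∀ g : G, g ∉ H → Submodule.map (ρ g).toLinearMap U ≠ U)
    (hb : ∀ g : G, g ∉ H → ∀ W : Submodule K V, W ≤ U →
      (∀ x : G, x ∈ H → g⁻¹ * x * g ∈ H → ∀ w ∈ W, ρ x w ∈ W) → W = ⊥ ∨ W = U) :
    (∀ g₁ g₂ : G,
      Submodule.map (ρ g₁).toLinearMap U ≠ Submodule.map (ρ g₂).toLinearMap U →
      Submodule.map (ρ g₁).toLinearMap U ⊓ Submodule.map (ρ g₂).toLinearMap U = ⊥) ∧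
    (∀ W₁ ∈ {W : Submodule K V | ∃ g : G, W = Submodule.map (ρ g).toLinearMap U},
     ∀ W₂ ∈ {W : Submodule K V | ∃ g : G, W = Submodule.map (ρ g).toLinearMap U},
      ∃ g : G, Submodule.map (ρ g).toLinearMap W₁ = W₂) ∧
    Nat.card {W : Submodule K V | ∃ g : G, W = Submodule.map (ρ g).toLinearMap U} = n := by
  open SubspaceTranslates in
  have hH (h : G) (hh : h ∈ H) : U.map (ρ h).toLinearMap = U := map_eq_self_of_mem ρ hUinv hh
  have hstab (g : G) : U.map (ρ g).toLinearMap = U ↔ g ∈ H := ⟨not_imp_not.1 (ha g), hH g⟩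
  refine ⟨fun g₁ g₂ => map_inf_map_eq_bot ρ hH fun g hg => inf_map_eq_bot ρ hUinv ha hb hg,
    ?_, hn ▸ nat_card_translates ρ hstab⟩
  rintro _ ⟨g₁, rfl⟩ _ ⟨g₂, rfl⟩
  exact ⟨g₂ * g₁⁻¹, by rw [map_map_eq_map_mul, inv_mul_cancel_right]⟩
end
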